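/- arXiv:1306.1686 — 2 statements merged into one kernel-verified Lean document; each statement's English description precedes it below -/
import Mathlib

section
/- Let A : H → Set H be monotone, let ε ∈ (0, 1], and let J : H → H be a resolvent of A, i.e. (z − J z)/ε ∈ A (J z) for every z ∈ H; write A_ε z = (z − J z)/ε. Let a ∈ H, v₀ ∈ A a, r₀ ≥ 0, and let z ∈ H with A_ε z ≠ 0, and let û ∈ A(a + r₀·(A_ε z / ‖A_ε z‖)). Then r₀·‖A_ε z‖ ≤ ⟪A_ε z, z − a⟫ + ‖û‖·‖z − a‖ + (‖v₀‖ + r₀)·‖û‖. -/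
/-!
Put `u = A_ε z ∈ A (J z)` and `w = a + r₀ • (u / ‖u‖)`. Monotonicity of `A` at `J z` and `w` gives
`⟪u, w - J z⟫ ≤ ⟪û, w - J z⟫`; the left side is `r₀ ‖u‖ - ⟪u, z - a⟫ + ε ‖u‖²` because
`z - J z = ε u`, and the right side is at most `‖û‖ (‖J z - a‖ + r₀)`. Finally `J z` stays close to
`a`: monotonicity at `J z` and `a` shows that `J z - a` is no longer than `z - (a + ε v₀)`, since `a`
is the resolvent of `a + ε v₀`.
-/

open scoped RealInnerProductSpace

section

variable {H : Type*} [NormedAddCommGroup H] [InnerProductSpace ℝ H]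

def IsMonotoneOperator (A : H → Set H) : Prop :=
  ∀ x u y v : H, y ∈ A x → v ∈ A u → 0 ≤ ⟪v - y, u - x⟫

theorem norm_le_of_norm_sq_le_inner {x y : H} (h : ‖x‖ ^ 2 ≤ ⟪y, x⟫) : ‖x‖ ≤ ‖y‖ := by
  have hxy : ‖x‖ * ‖x‖ ≤ ‖y‖ * ‖x‖ := by nlinarith [real_inner_le_norm y x]
  nlinarith [norm_nonneg x, norm_nonneg y]

theorem inner_inv_norm_smul_self (u : H) : ⟪u, ‖u‖⁻¹ • u⟫ = ‖u‖ := by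
  rw [real_inner_smul_right, real_inner_self_eq_norm_sq]
  rcases eq_or_ne ‖u‖ 0 with hu | hu
  · simp [hu]
  · field_simp

theorem norm_inv_norm_smul_le_one (u : H) : ‖‖u‖⁻¹ • u‖ ≤ 1 := by
  simpa using inv_norm_smul_mem_unitClosedBall u

theorem IsMonotoneOperator.norm_resolvent_sub_le {A : H → Set H} (hA : IsMonotoneOperator A)
    {ε : ℝ} (hε : 0 < ε) {z p a v₀ : H} (hp : ε⁻¹ • (z - p) ∈ A p) (hv₀ : v₀ ∈ A a) :
    ‖p - a‖ ≤ ‖z - (a + ε • v₀)‖ := by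
  apply norm_le_of_norm_sq_le_inner
  have hmon : 0 ≤ ⟪ε⁻¹ • (z - p) - v₀, p - a⟫ := hA a p v₀ _ hv₀ hp
  have hscaled : ε • (ε⁻¹ • (z - p) - v₀) = z - (a + ε • v₀) - (p - a) := by
    rw [smul_sub, smul_inv_smul₀ hε.ne']
    abel
  have : 0 ≤ ⟪z - (a + ε • v₀) - (p - a), p - a⟫ := by
    rw [← hscaled, real_inner_smul_left]
    positivity
  rwa [inner_sub_left, real_inner_self_eq_norm_sq, sub_nonneg] at this

theorem IsMonotoneOperator.norm_resolvent_sub_le_add {A : H → Set H} (hA : IsMonotoneOperator A)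
    {ε : ℝ} (hε : ε ∈ Set.Ioc (0 : ℝ) 1) {z p a v₀ : H} (hp : ε⁻¹ • (z - p) ∈ A p)
    (hv₀ : v₀ ∈ A a) : ‖p - a‖ ≤ ‖z - a‖ + ‖v₀‖ := calc
  ‖p - a‖ ≤ ‖z - (a + ε • v₀)‖ := hA.norm_resolvent_sub_le hε.1 hp hv₀
  _ ≤ ‖z - a‖ + ε * ‖v₀‖ := by
    rw [← sub_sub, ← norm_smul_of_nonneg hε.1.le]
    exact norm_sub_le _ _
  _ ≤ ‖z - a‖ + ‖v₀‖ := by gcongr; exact mul_le_of_le_one_left (norm_nonneg _) hε.2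

theorem IsMonotoneOperator.mul_norm_le {A : H → Set H} (hA : IsMonotoneOperator A)
    {p a u uh : H} {r : ℝ} (hr : 0 ≤ r) (hu : u ∈ A p) (huh : uh ∈ A (a + r • (‖u‖⁻¹ • u))) :
    r * ‖u‖ ≤ ⟪u, p - a⟫ + ‖uh‖ * (‖p - a‖ + r) := by
  set w := a + r • (‖u‖⁻¹ • u) with hw
  have hmon : ⟪u, w - p⟫ ≤ ⟪uh, w - p⟫ := by
    have := hA p w u uh hu huh
    rwa [inner_sub_left, sub_nonneg] at this
  have hsplit : w - p = r • (‖u‖⁻¹ • u) - (p - a) := by rw [hw]; abel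
  have hlhs : ⟪u, w - p⟫ = r * ‖u‖ - ⟪u, p - a⟫ := by
    rw [hsplit, inner_sub_right, real_inner_smul_right, inner_inv_norm_smul_self]
  have hdist : ‖w - p‖ ≤ ‖p - a‖ + r := calc
    ‖w - p‖ ≤ r * ‖‖u‖⁻¹ • u‖ + ‖p - a‖ := by
      rw [hsplit, ← norm_smul_of_nonneg hr]; exact norm_sub_le _ _
    _ ≤ ‖p - a‖ + r := by nlinarith [norm_inv_norm_smul_le_one u]
  have hrhs : ⟪uh, w - p⟫ ≤ ‖uh‖ * (‖p - a‖ + r) :=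
    (real_inner_le_norm _ _).trans (by gcongr)
  linarith

end

theorem stmt_13_general {H : Type*} [NormedAddCommGroup H] [InnerProductSpace ℝ H]
    (A : H → Set H)
    (hmono : ∀ x u y v : H, y ∈ A x → v ∈ A u → 0 ≤ ⟪v - y, u - x⟫)
    (ε : ℝ) (hε : ε ∈ Set.Ioc (0 : ℝ) 1)
    (J : H → H) (hJ : ∀ z : H, ε⁻¹ • (z - J z) ∈ A (J z))
    (Aε : H → H) (hAε : ∀ z : H, Aε z = ε⁻¹ • (z - J z))
    (a : H) (v₀ : H) (hv₀ : v₀ ∈ A a)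
    (r₀ : ℝ) (hr₀ : 0 ≤ r₀)
    (z : H)
    (uh : H) (huh : uh ∈ A (a + r₀ • (‖Aε z‖⁻¹ • Aε z))) :
    r₀ * ‖Aε z‖ ≤ ⟪Aε z, z - a⟫ + ‖uh‖ * ‖z - a‖ + (‖v₀‖ + r₀) * ‖uh‖ := by
  have hu : Aε z ∈ A (J z) := by rw [hAε]; exact hJ z
  have hzJ : z - J z = ε • Aε z := by rw [hAε, smul_inv_smul₀ hε.1.ne']
  have hinner : ⟪Aε z, J z - a⟫ ≤ ⟪Aε z, z - a⟫ := by
    have hsplit : J z - a = (z - a) - (z - J z) := by abel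
    rw [hsplit, hzJ, inner_sub_right, real_inner_smul_right, real_inner_self_eq_norm_sq]
    exact sub_le_self _ (by have := hε.1; positivity)
  have hJa : ‖J z - a‖ ≤ ‖z - a‖ + ‖v₀‖ :=
    IsMonotoneOperator.norm_resolvent_sub_le_add hmono hε (hJ z) hv₀
  calc r₀ * ‖Aε z‖ ≤ ⟪Aε z, J z - a⟫ + ‖uh‖ * (‖J z - a‖ + r₀) :=
        IsMonotoneOperator.mul_norm_le hmono hr₀ hu huh
    _ ≤ ⟪Aε z, z - a⟫ + ‖uh‖ * (‖z - a‖ + ‖v₀‖ + r₀) := by gcongr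
    _ = ⟪Aε z, z - a⟫ + ‖uh‖ * ‖z - a‖ + (‖v₀‖ + r₀) * ‖uh‖ := by ring

theorem stmt_13 {H : Type*} [NormedAddCommGroup H] [InnerProductSpace ℝ H] [CompleteSpace H]
    (A : H → Set H)
    (hmono : ∀ x u y v : H, y ∈ A x → v ∈ A u → 0 ≤ ⟪v - y, u - x⟫)
    (ε : ℝ) (hε : ε ∈ Set.Ioc (0 : ℝ) 1)
    (J : H → H) (hJ : ∀ z : H, ε⁻¹ • (z - J z) ∈ A (J z))
    (Aε : H → H) (hAε : ∀ z : H, Aε z = ε⁻¹ • (z - J z))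
    (a : H) (v₀ : H) (hv₀ : v₀ ∈ A a)
    (r₀ : ℝ) (hr₀ : 0 ≤ r₀)
    (z : H) (hz : Aε z ≠ 0)
    (uh : H) (huh : uh ∈ A (a + r₀ • (‖Aε z‖⁻¹ • Aε z))) :
    r₀ * ‖Aε z‖ ≤ ⟪Aε z, z - a⟫ + ‖uh‖ * ‖z - a‖ + (‖v₀‖ + r₀) * ‖uh‖ :=
  stmt_13_general A hmono ε hε J hJ Aε hAε a v₀ hv₀ r₀ hr₀ z uh huh
end

section
/- Let a ∈ H and r₀ ≥ 0 be such that the closed ball B̄(a, r₀) is contained in C. Then for every z ∈ H, r₀·‖z − P z‖ + ‖z − P z‖² ≤ ⟪z − P z, z − a⟫; equivalently, r₀·‖z − P z‖ ≤ ⟪z − P z, P z − a⟫. -/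
open scoped RealInnerProductSpace

/-- The support function of `closedBall a r` in direction `u` is attained at `a + (r / ‖u‖) • u`
(for `u = 0` this is `a`, as `r / 0 = 0`). -/
lemma exists_mem_closedBall_inner_sub_eq {H : Type*} [NormedAddCommGroup H] [InnerProductSpace ℝ H]
    (a u : H) {r : ℝ} (hr : 0 ≤ r) :
    ∃ c ∈ Metric.closedBall a r, ⟪u, c - a⟫ = r * ‖u‖ := by
  refine ⟨a + (r / ‖u‖) • u, ?_, ?_⟩
  · rcases eq_or_ne u 0 with rfl | hu
    · simpa using hr
    · rw [Metric.mem_closedBall, dist_eq_norm, add_sub_cancel_left, norm_smul, Real.norm_eq_abs,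
        abs_of_nonneg (div_nonneg hr (norm_nonneg u)), div_mul_cancel₀ _ (norm_ne_zero_iff.mpr hu)]
  · rw [add_sub_cancel_left, real_inner_smul_right, real_inner_self_eq_norm_sq]
    rcases eq_or_ne ‖u‖ 0 with hu | hu
    · simp [hu]
    · field_simp

lemma mul_norm_le_inner_of_closedBall_subset {H : Type*} [NormedAddCommGroup H]
    [InnerProductSpace ℝ H] {C : Set H} {a p u : H} {r : ℝ} (hr : 0 ≤ r)
    (hball : Metric.closedBall a r ⊆ C) (hu : ∀ c ∈ C, 0 ≤ ⟪u, p - c⟫) :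
    r * ‖u‖ ≤ ⟪u, p - a⟫ := by
  obtain ⟨c, hc, hc_eq⟩ := exists_mem_closedBall_inner_sub_eq a u hr
  have h := hu c (hball hc)
  rw [← sub_sub_sub_cancel_right p c a, inner_sub_right, hc_eq] at h
  linarith

theorem stmt_14_general {H : Type*} [NormedAddCommGroup H] [InnerProductSpace ℝ H]
    (C : Set H)
    (P : H → H)
    (hP : ∀ z : H, P z ∈ C ∧ ∀ c ∈ C, ⟪P z - z, P z - c⟫ ≤ 0)
    (a : H) (r₀ : ℝ) (hr₀ : 0 ≤ r₀) (hball : Metric.closedBall a r₀ ⊆ C) :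
    ∀ z : H,
      r₀ * ‖z - P z‖ + ‖z - P z‖ ^ 2 ≤ ⟪z - P z, z - a⟫ ∧
      r₀ * ‖z - P z‖ ≤ ⟪z - P z, P z - a⟫ := by
  intro z
  have hnormal : ∀ c ∈ C, 0 ≤ ⟪z - P z, P z - c⟫ := fun c hc => by
    have h := (hP z).2 c hc
    rw [← neg_sub z (P z), inner_neg_left] at h
    linarith
  have key := mul_norm_le_inner_of_closedBall_subset hr₀ hball hnormal
  have hsplit : ⟪z - P z, z - a⟫ = ‖z - P z‖ ^ 2 + ⟪z - P z, P z - a⟫ := by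
    rw [← sub_add_sub_cancel z (P z) a, inner_add_right, real_inner_self_eq_norm_sq]
  exact ⟨by linarith, key⟩

theorem stmt_14 {H : Type*} [NormedAddCommGroup H] [InnerProductSpace ℝ H] [CompleteSpace H]
    (C : Set H) (hCne : C.Nonempty) (hCcl : IsClosed C) (hCcv : Convex ℝ C)
    (P : H → H)
    (hP : ∀ z : H, P z ∈ C ∧ ∀ c ∈ C, ⟪P z - z, P z - c⟫ ≤ 0)
    (a : H) (r₀ : ℝ) (hr₀ : 0 ≤ r₀) (hball : Metric.closedBall a r₀ ⊆ C) :
    ∀ z : H,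
      r₀ * ‖z - P z‖ + ‖z - P z‖ ^ 2 ≤ ⟪z - P z, z - a⟫ ∧
      r₀ * ‖z - P z‖ ≤ ⟪z - P z, P z - a⟫ :=
  stmt_14_general C P hP a r₀ hr₀ hball
end
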